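/- arXiv:1708.05155 — 6 statements merged into one kernel-verified Lean document; each statement's English description precedes it below -/
import Mathlib

section
/- If a finite simple graph G has maximum degree at most d and pathwidth at most w, then the cutwidth of G is at most d * w. -/
open scoped Classical

/-- The edge separation number of the cut at position `k` of the linear
arrangement `σ`: the number of edges with one endpoint among the first `k`
vertices and the other among the rest. -/
noncomputable def edgeSep {V : Type*} [Fintype V] (G : SimpleGraph V)
    (σ : Fin (Fintype.card V) ≃ V) (k : ℕ) : ℕ :=
  (G.edgeFinset.filter fun e =>
    ∃ u ∈ e, ∃ v ∈ e, ((σ.symm u : ℕ) < k ∧ k ≤ (σ.symm v : ℕ))).card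

/-- The vertex separation number of the cut at position `k`: the number of
vertices among the first `k` that have a neighbor among the rest. -/
noncomputable def vertSep {V : Type*} [Fintype V] (G : SimpleGraph V)
    (σ : Fin (Fintype.card V) ≃ V) (k : ℕ) : ℕ :=
  (Finset.univ.filter fun v : V =>
    (σ.symm v : ℕ) < k ∧ ∃ u, G.Adj v u ∧ k ≤ (σ.symm u : ℕ)).card


/-- Edge separation number of an arrangement: max over all cuts. -/
noncomputable def esn {V : Type*} [Fintype V] (G : SimpleGraph V)
    (σ : Fin (Fintype.card V) ≃ V) : ℕ :=
  (Finset.range (Fintype.card V)).sup (edgeSep G σ)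

/-- Vertex separation number of an arrangement: max over all cuts. -/
noncomputable def vsn {V : Type*} [Fintype V] (G : SimpleGraph V)
    (σ : Fin (Fintype.card V) ≃ V) : ℕ :=
  (Finset.range (Fintype.card V)).sup (vertSep G σ)


theorem stmt_7 {V : Type*} [Fintype V] (G : SimpleGraph V) [DecidableRel G.Adj]
    (d w : ℕ) (hd : G.maxDegree ≤ d)
    (hw : sInf {t | ∃ σ : Fin (Fintype.card V) ≃ V, vsn G σ = t} ≤ w) :
    sInf {t | ∃ σ : Fin (Fintype.card V) ≃ V, esn G σ = t} ≤ d * w := by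
  classical
  have key : ∀ (σ : Fin (Fintype.card V) ≃ V) (k : ℕ),
      edgeSep G σ k ≤ d * vertSep G σ k := by
    intro σ k
    set S : Finset V := Finset.univ.filter fun v : V =>
      (σ.symm v : ℕ) < k ∧ ∃ u, G.Adj v u ∧ k ≤ (σ.symm u : ℕ) with hS
    have hScard : vertSep G σ k = S.card := by unfold vertSep; congr!
    have hstep : edgeSep G σ k ≤ (S.biUnion (fun v => G.incidenceFinset v)).card := by
      unfold edgeSep
      apply Finset.card_le_card
      intro e he
      rw [Finset.mem_filter] at he
      obtain ⟨heE, u, hu, v, hv, h1, h2⟩ := he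
      have huv : u ≠ v := by rintro rfl; omega
      have heq : e = s(u, v) := (Sym2.mem_and_mem_iff huv).mp ⟨hu, hv⟩
      have hadj : G.Adj u v := by
        unfold SimpleGraph.edgeFinset at heE
        simp only [Set.mem_toFinset] at heE
        rwa [heq, SimpleGraph.mem_edgeSet] at heE
      rw [Finset.mem_biUnion]
      refine ⟨u, ?_, ?_⟩
      · rw [hS, Finset.mem_filter]
        exact ⟨Finset.mem_univ _, h1, v, hadj, h2⟩
      · rw [SimpleGraph.mem_incidenceFinset]
        exact ⟨heq ▸ (SimpleGraph.mem_edgeSet G).mpr hadj, hu⟩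
    calc edgeSep G σ k ≤ (S.biUnion (fun v => G.incidenceFinset v)).card := hstep
      _ ≤ ∑ v ∈ S, (G.incidenceFinset v).card := Finset.card_biUnion_le
      _ ≤ ∑ _v ∈ S, d := by
          refine Finset.sum_le_sum fun v _ => ?_
          rw [G.card_incidenceFinset_eq_degree]
          exact le_trans (G.degree_le_maxDegree v) hd
      _ = d * S.card := by rw [Finset.sum_const, smul_eq_mul, mul_comm]
      _ = d * vertSep G σ k := by rw [hScard]
  have key2 : ∀ σ : Fin (Fintype.card V) ≃ V, esn G σ ≤ d * vsn G σ := by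
    intro σ
    refine Finset.sup_le fun k hk => ?_
    exact le_trans (key σ k) (Nat.mul_le_mul_left d (Finset.le_sup hk))
  have hne : {t | ∃ σ : Fin (Fintype.card V) ≃ V, vsn G σ = t}.Nonempty := by
    obtain ⟨σ⟩ := Fintype.truncEquivFinOfCardEq (rfl : Fintype.card V = Fintype.card V)
    exact ⟨_, σ.symm, rfl⟩
  obtain ⟨σ0, hσ0⟩ := Nat.sInf_mem hne
  have hv : vsn G σ0 ≤ w := by rw [hσ0]; exact hw
  calc sInf {t | ∃ σ : Fin (Fintype.card V) ≃ V, esn G σ = t}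
      ≤ esn G σ0 := Nat.sInf_le ⟨σ0, rfl⟩
    _ ≤ d * vsn G σ0 := key2 σ0
    _ ≤ d * w := Nat.mul_le_mul_left d hv
end

section
/- If a finite simple graph G has cutwidth at most w and maximum degree at most d, then G has carving width at most max(w, d). -/
open scoped Classical

/-- A carving decomposition of a graph `G`: an unrooted tree whose leaves are
bijectively labeled by the vertices of `G` and whose internal vertices have
degree three. -/
structure CarvingDecomp {V : Type*} [Fintype V] (G : SimpleGraph V) where
  B : Type
  fin : Fintype B
  tree : SimpleGraph B
  conn : tree.Connected
  acyclic : tree.IsAcyclic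
  degrees : ∀ b : B, haveI := fin; tree.degree b = 1 ∨ tree.degree b = 3
  leafLabel : {b : B // haveI := fin; tree.degree b = 1} ≃ V

namespace CarvingDecomp

variable {V : Type*} [Fintype V] {G : SimpleGraph V}

attribute [instance] CarvingDecomp.fin

/-- The side of tree-vertex `x` after removing the tree edge `xy`:
those vertices of `G` whose leaf is still reachable from `x`. -/
def side (c : CarvingDecomp G) (x y : B c) (v : V) : Prop :=
  (c.tree.deleteEdges {s(x, y)}).Reachable x (c.leafLabel.symm v : B c)

/-- The number of edges of `G` crossing the partition of `V` induced by
removing the tree edge `xy`. -/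
noncomputable def cross (c : CarvingDecomp G) (x y : B c) : ℕ :=
  (G.edgeFinset.filter fun e =>
    ∃ u ∈ e, ∃ v ∈ e, c.side x y u ∧ c.side y x v).card

/-- The width of a carving decomposition. -/
noncomputable def width (c : CarvingDecomp G) : ℕ :=
  sSup {t | ∃ x y : B c, c.tree.Adj x y ∧ c.cross x y = t}

end CarvingDecomp

/-- The carving width of `G`. -/
noncomputable def carvingWidth {V : Type*} [Fintype V] (G : SimpleGraph V) : ℕ :=
  sInf {t | ∃ c : CarvingDecomp G, c.width = t}

/-- The cutwidth of `G`. -/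
noncomputable def cutwidth {V : Type*} [Fintype V] (G : SimpleGraph V) : ℕ :=
  sInf {t | ∃ σ : Fin (Fintype.card V) ≃ V,
    (Finset.range (Fintype.card V)).sup (edgeSep G σ) = t}

/-!
Order the vertices by a linear arrangement of optimal cutwidth and hang them, in that order, as
the leaves of a caterpillar. Removing the tree edge at a leaf `v` isolates `v`, so it cuts the
`deg v ≤ d` edges at `v`; removing a spine edge splits the arrangement into a prefix and the
complementary suffix, so it cuts at most `w` edges. A graph with fewer than two vertices has no
carving decomposition at all, and then its carving width is the junk value `sInf ∅ = 0`.
-/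

namespace SimpleGraph

variable {W : Type*} {T : SimpleGraph W} {x y z : W} {S : Set W}

def SeparatesEdge (T : SimpleGraph W) (x y : W) (S : Set W) : Prop :=
  x ∈ S ∧ y ∉ S ∧ ∀ a b, T.Adj a b → a ∈ S → b ∉ S → s(a, b) = s(x, y)

lemma SeparatesEdge.symm (h : T.SeparatesEdge x y S) : T.SeparatesEdge y x Sᶜ := by
  obtain ⟨hx, hy, hS⟩ := h
  refine ⟨hy, not_not.2 hx, fun a b hab ha hb => ?_⟩
  rw [Sym2.eq_swap, hS b a hab.symm (not_not.1 hb) ha, Sym2.eq_swap]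

lemma SeparatesEdge.mem_of_reachable (h : T.SeparatesEdge x y S)
    (hz : (T.deleteEdges {s(x, y)}).Reachable x z) : z ∈ S := by
  obtain ⟨p⟩ := hz
  suffices ∀ {a b} (p : (T.deleteEdges {s(x, y)}).Walk a b), a ∈ S → b ∈ S from this p h.1
  intro a b p ha
  induction p with
  | nil => exact ha
  | cons hab _ ih =>
    rw [deleteEdges_adj, Set.mem_singleton_iff] at hab
    exact ih (by_contra fun hb => hab.2 (h.2.2 _ _ hab.1 ha hb))

lemma SeparatesEdge.isBridge (h : T.SeparatesEdge x y S) : T.IsBridge s(x, y) :=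
  isBridge_iff.2 fun hxy => h.2.1 (h.mem_of_reachable hxy)

end SimpleGraph

open SimpleGraph

namespace CarvingDecomp

variable {V : Type*} [Fintype V] {G : SimpleGraph V} (c : CarvingDecomp G) {x y : c.B}

lemma cross_comm : c.cross x y = c.cross y x := by
  unfold cross
  congr 1
  refine Finset.filter_congr fun e _ => ⟨?_, ?_⟩ <;>
    exact fun ⟨u, hu, v, hv, hsu, hsv⟩ => ⟨v, hv, u, hu, hsv, hsu⟩

lemma cross_le_degree [DecidableRel G.Adj] {u : V} (hx : ∀ v, c.side x y v → v = u) :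
    c.cross x y ≤ G.degree u := by
  classical
  refine (Finset.card_le_card fun e he => ?_).trans (G.card_incidenceFinset_eq_degree u).le
  obtain ⟨he, v, hv, -, -, hsv, -⟩ := Finset.mem_filter.1 he
  exact (G.mem_incidenceFinset u e).2 ⟨by simpa using he, hx v hsv ▸ hv⟩

lemma cross_le_edgeSep (σ : Fin (Fintype.card V) ≃ V) (k : ℕ)
    (hx : ∀ v, c.side x y v → (σ.symm v : ℕ) < k) (hy : ∀ v, c.side y x v → k ≤ σ.symm v) :
    c.cross x y ≤ edgeSep G σ k := by
  refine Finset.card_le_card fun e he => ?_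
  obtain ⟨he, u, hu, v, hv, hsu, hsv⟩ := Finset.mem_filter.1 he
  exact Finset.mem_filter.2 ⟨he, u, hu, v, hv, hx u hsu, hy v hsv⟩

lemma width_le {t : ℕ} (h : ∀ x y, c.tree.Adj x y → c.cross x y ≤ t) : c.width ≤ t :=
  csSup_le' <| by rintro _ ⟨x, y, hxy, rfl⟩; exact h x y hxy

theorem two_le_card (c : CarvingDecomp G) : 2 ≤ Fintype.card V := by
  have hT : c.tree.IsTree := ⟨c.conn, c.acyclic⟩
  obtain ⟨b⟩ := c.conn.nonempty
  have : Nontrivial c.B := by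
    obtain ⟨b', hb'⟩ := (c.tree.degree_pos_iff_exists_adj b).1 <| by
      rcases c.degrees b with h | h <;> omega
    exact ⟨b, b', hb'.ne⟩
  obtain ⟨u, v, huv, hu, hv⟩ := hT.exists_ne_and_degree_eq_one
  exact Fintype.one_lt_card_iff.2
    ⟨c.leafLabel ⟨u, by convert hu⟩, c.leafLabel ⟨v, by convert hv⟩, by simpa using huv⟩

lemma carvingWidth_le_width : carvingWidth G ≤ c.width :=
  Nat.sInf_le ⟨c, rfl⟩

end CarvingDecomp

section Width

variable {V : Type*} [Fintype V] (G : SimpleGraph V)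

lemma carvingWidth_eq_zero_of_card_lt_two
    (h : Fintype.card V < 2) : carvingWidth G = 0 := by
  have : {t | ∃ c : CarvingDecomp G, c.width = t} = ∅ :=
    Set.eq_empty_of_forall_notMem fun _ ⟨c, _⟩ => h.not_ge c.two_le_card
  rw [carvingWidth, this, Nat.sInf_empty]

lemma exists_sup_edgeSep_eq_cutwidth :
    ∃ σ : Fin (Fintype.card V) ≃ V,
      (Finset.range (Fintype.card V)).sup (edgeSep G σ) = cutwidth G :=
  Nat.sInf_mem (s := {t | ∃ σ : Fin (Fintype.card V) ≃ V,
    (Finset.range (Fintype.card V)).sup (edgeSep G σ) = t}) ⟨_, (Fintype.equivFin V).symm, rfl⟩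

end Width

/-- Leaves `0` and `1` hang from spine vertex `0`, leaf `k` from spine vertex `k - 1`, and leaves
`m` and `m + 1` from spine vertex `m - 1`; for `m = 0` the two leaves are joined directly. -/
def caterpillar (m : ℕ) : SimpleGraph (Fin (m + 2) ⊕ Fin m) where
  Adj
    | .inl k, .inl k' => m = 0 ∧ k ≠ k'
    | .inl k, .inr i | .inr i, .inl k => (i : ℕ) = min ((k : ℕ) - 1) (m - 1)
    | .inr i, .inr j => (i : ℕ) + 1 = j ∨ (j : ℕ) + 1 = i
  symm := ⟨by rintro (k | i) (k' | j) h <;> simp_all <;> tauto⟩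
  loopless := ⟨by rintro (k | i) h <;> simp_all⟩

namespace caterpillar

variable {m : ℕ}

@[simp] lemma adj_inl_inl {k k' : Fin (m + 2)} :
    (caterpillar m).Adj (.inl k) (.inl k') ↔ m = 0 ∧ k ≠ k' := .rfl

@[simp] lemma adj_inl_inr {k : Fin (m + 2)} {i : Fin m} :
    (caterpillar m).Adj (.inl k) (.inr i) ↔ (i : ℕ) = min ((k : ℕ) - 1) (m - 1) := .rfl

@[simp] lemma adj_inr_inl {k : Fin (m + 2)} {i : Fin m} :
    (caterpillar m).Adj (.inr i) (.inl k) ↔ (i : ℕ) = min ((k : ℕ) - 1) (m - 1) := .rfl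

@[simp] lemma adj_inr_inr {i j : Fin m} :
    (caterpillar m).Adj (.inr i) (.inr j) ↔ (i : ℕ) + 1 = j ∨ (j : ℕ) + 1 = i := .rfl

lemma degree_inl (k : Fin (m + 2)) : (caterpillar m).degree (.inl k) = 1 := by
  rw [degree_eq_one_iff_existsUnique_adj]
  rcases m.eq_zero_or_pos with rfl | hm
  · refine ⟨.inl k.rev, by simp [Fin.ext_iff]; omega, ?_⟩
    rintro (k' | i) h
    · simp [Fin.ext_iff] at h ⊢; omega
    · exact i.elim0
  · refine ⟨.inr ⟨min ((k : ℕ) - 1) (m - 1), by omega⟩, rfl, ?_⟩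
    rintro (k' | i) h
    · simp at h; omega
    · simp_all [Fin.ext_iff]

lemma degree_inr (i : Fin m) : (caterpillar m).degree (.inr i) = 3 := by
  obtain ⟨i, hi⟩ := i
  rw [← card_neighborFinset_eq_degree, Finset.card_eq_three]
  rcases (by omega : m = 1 ∨ (i = 0 ∧ 2 ≤ m) ∨ (0 < i ∧ i + 2 ≤ m) ∨ (0 < i ∧ i + 1 = m))
    with h | h | h | h
  · subst h
    refine ⟨.inl 0, .inl 1, .inl 2, by simp, by simp, by simp, ?_⟩
    ext (⟨k, hk⟩ | ⟨j, hj⟩) <;> simp [Fin.ext_iff] <;> omega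
  · refine ⟨.inl ⟨0, by omega⟩, .inl ⟨1, by omega⟩, .inr ⟨1, by omega⟩,
      by simp, by simp, by simp, ?_⟩
    ext (⟨k, hk⟩ | ⟨j, hj⟩) <;> simp [Fin.ext_iff] <;> omega
  · refine ⟨.inl ⟨i + 1, by omega⟩, .inr ⟨i - 1, by omega⟩, .inr ⟨i + 1, by omega⟩,
      by simp, by simp, by simp [Fin.ext_iff], ?_⟩
    ext (⟨k, hk⟩ | ⟨j, hj⟩) <;> simp [Fin.ext_iff] <;> omega
  · refine ⟨.inl ⟨m, by omega⟩, .inl ⟨m + 1, by omega⟩, .inr ⟨m - 2, by omega⟩,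
      by simp, by simp, by simp, ?_⟩
    ext (⟨k, hk⟩ | ⟨j, hj⟩) <;> simp [Fin.ext_iff] <;> omega

lemma connected (m : ℕ) : (caterpillar m).Connected := by
  rw [connected_iff_exists_forall_reachable]
  rcases m.eq_zero_or_pos with rfl | hm
  · refine ⟨.inl 0, ?_⟩
    rintro (k | i)
    · by_cases hk : 0 = k
      · exact hk ▸ .rfl
      · exact (adj_inl_inl.2 ⟨rfl, hk⟩).reachable
    · exact i.elim0
  have spine : ∀ i (hi : i < m), (caterpillar m).Reachable (.inr ⟨0, hm⟩) (.inr ⟨i, hi⟩) := by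
    intro i
    induction i with
    | zero => exact fun _ => .rfl
    | succ i ih => exact fun hi => (ih (by omega)).trans (adj_inr_inr.2 (.inl rfl)).reachable
  refine ⟨.inr ⟨0, hm⟩, ?_⟩
  rintro (k | ⟨i, hi⟩)
  · have hk : min ((k : ℕ) - 1) (m - 1) < m := by omega
    exact (spine _ hk).trans
      (adj_inr_inl.2 rfl : (caterpillar m).Adj (.inr ⟨_, hk⟩) (.inl k)).reachable
  · exact spine i hi

def leftOf (m i : ℕ) : Set (Fin (m + 2) ⊕ Fin m) :=
  {b | b.elim (fun k : Fin (m + 2) => (k : ℕ) ≤ i + 1) (fun l : Fin m => (l : ℕ) ≤ i)}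

lemma separatesEdge_inr {i j : Fin m} (hij : (i : ℕ) + 1 = j) :
    (caterpillar m).SeparatesEdge (.inr i) (.inr j) (leftOf m i) := by
  refine ⟨by simp [leftOf], by simp [leftOf]; omega, ?_⟩
  have := j.2
  rintro (k | l) (k' | l') hab ha hb <;> simp [leftOf, Fin.ext_iff] at hab ha hb ⊢ <;> omega

lemma separatesEdge_inl {k : Fin (m + 2)} {y} (hy : (caterpillar m).Adj (.inl k) y) :
    (caterpillar m).SeparatesEdge (.inl k) y {.inl k} := by
  refine ⟨rfl, hy.ne', ?_⟩
  rintro a b hab rfl -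
  rw [(degree_eq_one_iff_existsUnique_adj.1 (degree_inl k)).unique hab hy]

lemma exists_separatesEdge {x y} (h : (caterpillar m).Adj x y) :
    ∃ S, (caterpillar m).SeparatesEdge x y S := by
  rcases x with k | i
  · exact ⟨_, separatesEdge_inl h⟩
  rcases y with k | j
  · exact ⟨_, (separatesEdge_inl h.symm).symm⟩
  rcases adj_inr_inr.1 h with hij | hji
  · exact ⟨_, separatesEdge_inr hij⟩
  · exact ⟨_, (separatesEdge_inr hji).symm⟩

lemma isAcyclic (m : ℕ) : (caterpillar m).IsAcyclic :=
  isAcyclic_iff_forall_adj_isBridge.2 fun _ _ h =>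
    (exists_separatesEdge h).elim fun _ hS => hS.isBridge

end caterpillar

section CaterpillarDecomp

variable {V : Type*} [Fintype V] {m : ℕ}

def caterpillarDecomp (G : SimpleGraph V) (e : Fin (m + 2) ≃ V) : CarvingDecomp G where
  B := Fin (m + 2) ⊕ Fin m
  fin := inferInstance
  tree := caterpillar m
  conn := caterpillar.connected m
  acyclic := caterpillar.isAcyclic m
  degrees := by
    rintro (k | i)
    exacts [.inl (caterpillar.degree_inl k), .inr (caterpillar.degree_inr i)]
  leafLabel := (Equiv.subtypeEquivRight fun b => by
      rcases b with k | i <;> simp [caterpillar.degree_inl, caterpillar.degree_inr]).trans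
    (Equiv.sumIsLeft.trans e)

lemma caterpillarDecomp_side_mem {G : SimpleGraph V} {e : Fin (m + 2) ≃ V}
    {x y : Fin (m + 2) ⊕ Fin m} {S : Set (Fin (m + 2) ⊕ Fin m)}
    (hS : (caterpillar m).SeparatesEdge x y S) {v : V} (hv : (caterpillarDecomp G e).side x y v) :
    .inl (e.symm v) ∈ S :=
  hS.mem_of_reachable hv

theorem width_caterpillarDecomp_le (G : SimpleGraph V) [DecidableRel G.Adj]
    (σ : Fin (Fintype.card V) ≃ V) (h : m + 2 = Fintype.card V) :
    (caterpillarDecomp G ((finCongr h).trans σ)).width ≤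
      max ((Finset.range (Fintype.card V)).sup (edgeSep G σ)) G.maxDegree := by
  set c := caterpillarDecomp G ((finCongr h).trans σ)
  have leaf : ∀ k y, (caterpillar m).Adj (.inl k) y → c.cross (.inl k) y ≤ G.maxDegree := by
    intro k y hy
    refine (c.cross_le_degree (u := σ (finCongr h k)) fun v hv => ?_).trans
      (G.degree_le_maxDegree _)
    have := caterpillarDecomp_side_mem (caterpillar.separatesEdge_inl hy) hv
    rw [Set.mem_singleton_iff, Sum.inl.injEq] at this
    simp [← this]
  have spine : ∀ i j : Fin m, (i : ℕ) + 1 = j →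
      c.cross (.inr i) (.inr j) ≤ (Finset.range (Fintype.card V)).sup (edgeSep G σ) := by
    intro i j hij
    have hS := caterpillar.separatesEdge_inr hij
    refine (c.cross_le_edgeSep σ (i + 2) (fun v hv => ?_) fun v hv => ?_).trans
      (Finset.le_sup (Finset.mem_range.2 (by omega)))
    · have := caterpillarDecomp_side_mem hS hv
      simp [caterpillar.leftOf] at this
      omega
    · have := caterpillarDecomp_side_mem hS.symm hv
      simp [caterpillar.leftOf] at this
      omega
  refine c.width_le fun x y hxy => ?_
  rcases x with k | i
  · exact (leaf k y hxy).trans (le_max_right _ _)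
  rcases y with k | j
  · exact (c.cross_comm ▸ leaf k _ hxy.symm).trans (le_max_right _ _)
  rcases caterpillar.adj_inr_inr.1 hxy with hij | hji
  · exact (spine i j hij).trans (le_max_left _ _)
  · exact (c.cross_comm ▸ spine j i hji).trans (le_max_left _ _)

end CaterpillarDecomp

theorem stmt_9 {V : Type*} [Fintype V] (G : SimpleGraph V) [DecidableRel G.Adj]
    (w d : ℕ) (hw : cutwidth G ≤ w) (hd : G.maxDegree ≤ d) :
    carvingWidth G ≤ max w d := by
  rcases lt_or_ge (Fintype.card V) 2 with hV | hV
  · exact (carvingWidth_eq_zero_of_card_lt_two G hV).trans_le (Nat.zero_le _)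
  obtain ⟨σ, hσ⟩ := exists_sup_edgeSep_eq_cutwidth G
  calc carvingWidth G
      ≤ (caterpillarDecomp G ((finCongr (Nat.sub_add_cancel hV)).trans σ)).width :=
        CarvingDecomp.carvingWidth_le_width _
    _ ≤ max (cutwidth G) G.maxDegree := hσ ▸ width_caterpillarDecomp_le G σ _
    _ ≤ max w d := max_le_max hw hd
end

section
/- Let T be an unrooted tree with n vertices, each of degree at most 3, and let P be a restricted partition of T of order z (z ≥ 1): a partition of V(T) into connected subtrees, each with at most z vertices, such that any subtree with more than two boundary edges is a single vertex, and no two adjacent subtrees can be merged while preserving these properties. Then P has O(n/z) parts; concretely, at most c·(n/z + 1) parts for some absolute constant c. -/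
/-!
Count the darts (oriented edges) of `T` whose endpoints lie in different parts. As `T` is a tree
and the parts are subtrees, there are `2 (|P| - 1)` of them, and a part with `b` boundary edges
is the tail of exactly `b` of them; every part has `b ≤ 3`. Call a crossing dart heavy if its
two parts have more than `z` vertices together. Summing part sizes over crossing darts gives
`(z + 1) · #heavy ≤ 6 n`. Maximality of the partition makes every crossing dart between two parts
with at most four boundary edges in total heavy, so a light dart has an end in a part with three
boundary edges, while darts leaving a leaf part are heavy. The contracted tree has two more
leaves than vertices of degree three, hence `#crossing ≤ 7 · #heavy` and
`(z + 1) (|P| - 1) ≤ 21 n`.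
-/

open scoped Classical

/-- The number of boundary edges of a vertex set `p` in the graph `T`:
edges with exactly one endpoint in `p`. -/
noncomputable def boundaryEdges {V : Type} [Fintype V] (T : SimpleGraph V)
    (p : Finset V) : ℕ :=
  (T.edgeFinset.filter fun e => ∃ u ∈ e, ∃ v ∈ e, u ∈ p ∧ v ∉ p).card

/-- `P` is a restricted partition of order `z` of the tree `T`. -/
def IsRestrictedPartition {V : Type} [Fintype V] (T : SimpleGraph V)
    (z : ℕ) (P : Finset (Finset V)) : Prop :=
  (∀ v : V, ∃! p, p ∈ P ∧ v ∈ p) ∧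
  (∀ p ∈ P, p.Nonempty) ∧
  (∀ p ∈ P, (T.induce (↑p : Set V)).Connected) ∧
  (∀ p ∈ P, p.card ≤ z) ∧
  (∀ p ∈ P, 2 < boundaryEdges T p → p.card = 1) ∧
  (∀ p ∈ P, ∀ q ∈ P, p ≠ q →
    (∃ u ∈ p, ∃ v ∈ q, T.Adj u v) →
    ¬((p ∪ q).card ≤ z ∧ boundaryEdges T (p ∪ q) ≤ 2 ∧
        (T.induce (↑(p ∪ q) : Set V)).Connected))

open Finset

theorem Finset.card_filter_eq_three_add_two {ι : Type*} (s : Finset ι) (b : ι → ℕ)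
    (hb : ∀ i ∈ s, 1 ≤ b i ∧ b i ≤ 3) (hsum : ∑ i ∈ s, b i + 2 = 2 * #s) :
    #{i ∈ s | b i = 3} + 2 = #{i ∈ s | b i = 1} := by
  have h : ∑ i ∈ s, (b i + if b i = 1 then 1 else 0) = ∑ i ∈ s, (2 + if b i = 3 then 1 else 0) :=
    sum_congr rfl fun i hi => by have := hb i hi; split_ifs <;> omega
  simp only [sum_add_distrib, sum_boole, Nat.cast_id, sum_const, smul_eq_mul] at h
  omega

theorem Nat.le_mul_div_add_one_of_mul_sub_one_le {k n z c : ℕ} (hz : 0 < z) (hc : 0 < c)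
    (h : z * (k - 1) ≤ c * n) : k ≤ c * (n / z + 1) := by
  have hn : c * n < z * (c * (n / z + 1)) :=
    calc c * n < c * (n / z * z + z) := Nat.mul_lt_mul_of_pos_left (Nat.lt_div_mul_add hz) hc
      _ = z * (c * (n / z + 1)) := by ring
  have := Nat.lt_of_mul_lt_mul_left (h.trans_lt hn)
  omega

namespace SimpleGraph

variable {V : Type} [Fintype V]

section Boundary

variable (G : SimpleGraph V)

noncomputable def leavingDarts (p : Finset V) : Finset G.Dart := {d | d.fst ∈ p ∧ d.snd ∉ p}

variable {G} in
@[simp]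
theorem mem_leavingDarts {p : Finset V} {d : G.Dart} :
    d ∈ G.leavingDarts p ↔ d.fst ∈ p ∧ d.snd ∉ p := by
  simp [leavingDarts]

theorem boundaryEdges_eq_card_leavingDarts (p : Finset V) :
    boundaryEdges G p = #(G.leavingDarts p) := by
  symm
  refine card_bij (fun d _ => d.edge) ?_ ?_ ?_
  · intro d hd
    exact mem_filter.2 ⟨mem_edgeFinset.2 d.edge_mem, d.fst, Sym2.mem_mk_left _ _, d.snd,
      Sym2.mem_mk_right _ _, mem_leavingDarts.1 hd⟩
  · intro d₁ h₁ d₂ h₂ h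
    rcases (dart_edge_eq_iff d₁ d₂).1 h with h | rfl
    · exact h
    · exact absurd (mem_leavingDarts.1 h₂).1 (mem_leavingDarts.1 h₁).2
  · intro e he
    obtain ⟨he, u, hu, v, hv, hup, hvp⟩ := mem_filter.1 he
    have huv : u ≠ v := fun h => hvp (h ▸ hup)
    obtain rfl : e = s(u, v) := (Sym2.mem_and_mem_iff huv).1 ⟨hu, hv⟩
    exact ⟨⟨(u, v), mem_edgeFinset.1 he⟩, mem_leavingDarts.2 ⟨hup, hvp⟩, rfl⟩

theorem boundaryEdges_singleton (v : V) : boundaryEdges G {v} = G.degree v := by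
  rw [boundaryEdges_eq_card_leavingDarts, ← dart_fst_fiber_card_eq_degree]
  congr 1
  ext d
  simp only [mem_leavingDarts, mem_filter, mem_univ, true_and, mem_singleton]
  exact ⟨And.left, fun h => ⟨h, h ▸ d.snd_ne_fst⟩⟩

variable {G}

theorem boundaryEdges_pos (hG : G.Connected) {p : Finset V} (hp : p.Nonempty)
    {v : V} (hv : v ∉ p) : 0 < boundaryEdges G p := by
  obtain ⟨u, hu⟩ := hp
  obtain ⟨d, -, hd⟩ := (hG u v).some.exists_boundary_dart p hu hv
  rw [boundaryEdges_eq_card_leavingDarts]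
  exact card_pos.2 ⟨d, mem_leavingDarts.2 hd⟩

theorem boundaryEdges_union_add_two_le {p q : Finset V} {u v : V} (huv : G.Adj u v)
    (hu : u ∈ p) (hv : v ∈ q) (hup : u ∉ q) (hvp : v ∉ p) :
    boundaryEdges G (p ∪ q) + 2 ≤ boundaryEdges G p + boundaryEdges G q := by
  set d : G.Dart := ⟨(u, v), huv⟩
  simp only [boundaryEdges_eq_card_leavingDarts]
  have hsub : G.leavingDarts (p ∪ q) ∪ {d, d.symm} ⊆ G.leavingDarts p ∪ G.leavingDarts q := by
    intro d' hd'
    simp only [mem_union, mem_leavingDarts, mem_insert, mem_singleton] at hd' ⊢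
    rcases hd' with ⟨hf, hs⟩ | rfl | rfl
    · tauto
    · exact Or.inl ⟨hu, hvp⟩
    · exact Or.inr ⟨hv, hup⟩
  have hdisj : Disjoint (G.leavingDarts (p ∪ q)) {d, d.symm} := by
    simp [d, hu, hv]
  calc _ = #(G.leavingDarts (p ∪ q) ∪ {d, d.symm}) := by
        rw [card_union_of_disjoint hdisj, card_pair d.symm_ne.symm]
    _ ≤ _ := (card_le_card hsub).trans (card_union_le _ _)

theorem card_darts_within_add_two (hG : G.IsAcyclic) {p : Finset V}
    (hp : (G.induce (p : Set V)).Connected) :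
    #{d : G.Dart | d.fst ∈ p ∧ d.snd ∈ p} + 2 = 2 * #p := by
  have hedges := IsTree.card_edgeFinset ⟨hp, hG.induce _⟩
  simp only [SetLike.coe_sort_coe, Fintype.card_coe] at hedges
  have hdarts : Fintype.card (G.induce (p : Set V)).Dart =
      #{d : G.Dart | d.fst ∈ p ∧ d.snd ∈ p} := by
    rw [← card_univ]
    refine card_bij (fun d _ => ⟨(d.fst.1, d.snd.1), d.adj⟩) (fun d _ => ?_) ?_ ?_
    · simp
    · intro d₁ _ d₂ _ h
      simp only [Dart.ext_iff, Prod.ext_iff] at h ⊢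
      exact ⟨Subtype.ext h.1, Subtype.ext h.2⟩
    · intro d hd
      obtain ⟨h₁, h₂⟩ := (mem_filter.1 hd).2
      exact ⟨⟨(⟨d.fst, h₁⟩, ⟨d.snd, h₂⟩), d.adj⟩, mem_univ _, rfl⟩
  rw [← hdarts, dart_card_eq_twice_card_edges]
  omega

end Boundary

section Crossing

variable (G : SimpleGraph V) (Q : Finpartition (univ : Finset V))

noncomputable def crossingDarts : Finset G.Dart := {d | d.snd ∉ Q.part d.fst}

noncomputable def heavyDarts (z : ℕ) : Finset G.Dart :=
  {d ∈ G.crossingDarts Q | z < #(Q.part d.fst) + #(Q.part d.snd)}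

variable {G Q}

@[simp]
theorem mem_crossingDarts {d : G.Dart} : d ∈ G.crossingDarts Q ↔ d.snd ∉ Q.part d.fst := by
  simp [crossingDarts]

theorem symm_mem_crossingDarts {d : G.Dart} :
    d.symm ∈ G.crossingDarts Q ↔ d ∈ G.crossingDarts Q := by
  simp only [mem_crossingDarts, Dart.symm_toProd, Prod.fst_swap, Prod.snd_swap,
    Q.mem_part_iff_part_eq_part (mem_univ _) (mem_univ _), eq_comm]

variable (G Q) in
theorem sum_darts_filter_part_fst (R : Finset V → V → Prop) [DecidableRel R]
    (w : G.Dart → ℕ) :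
    ∑ d : G.Dart with R (Q.part d.fst) d.snd, w d =
      ∑ p ∈ Q.parts, ∑ d : G.Dart with d.fst ∈ p ∧ R p d.snd, w d := by
  rw [← sum_fiberwise_of_maps_to (g := fun d : G.Dart => Q.part d.fst) (t := Q.parts)
    (fun d _ => Q.part_mem.2 (mem_univ _))]
  refine sum_congr rfl fun p hp => ?_
  rw [filter_filter]
  refine sum_congr (filter_congr fun d _ => ?_) fun _ _ => rfl
  rw [Q.part_eq_iff_mem hp]
  constructor
  · rintro ⟨hR, hd⟩
    exact ⟨hd, Q.part_eq_of_mem hp hd ▸ hR⟩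
  · rintro ⟨hd, hR⟩
    exact ⟨Q.part_eq_of_mem hp hd ▸ hR, hd⟩

variable (G Q) in
theorem sum_crossingDarts (w : Finset V → ℕ) :
    ∑ d ∈ G.crossingDarts Q, w (Q.part d.fst) = ∑ p ∈ Q.parts, boundaryEdges G p * w p := by
  rw [crossingDarts, sum_darts_filter_part_fst G Q (fun p v => v ∉ p)]
  refine sum_congr rfl fun p hp => ?_
  rw [boundaryEdges_eq_card_leavingDarts, leavingDarts, card_eq_sum_ones, sum_mul, one_mul]
  refine sum_congr rfl fun d hd => ?_
  rw [Q.part_eq_of_mem hp (mem_filter.1 hd).2.1]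

theorem sum_crossingDarts_snd (f : V → ℕ) :
    ∑ d ∈ G.crossingDarts Q, f d.snd = ∑ d ∈ G.crossingDarts Q, f d.fst :=
  sum_nbij' Dart.symm Dart.symm (fun _ hd => symm_mem_crossingDarts.2 hd)
    (fun _ hd => symm_mem_crossingDarts.2 hd) (fun d _ => d.symm_symm) (fun d _ => d.symm_symm)
    (fun _ _ => rfl)

theorem card_crossingDarts_filter_boundaryEdges_eq (k : ℕ) :
    #{d ∈ G.crossingDarts Q | boundaryEdges G (Q.part d.fst) = k} =
      k * #{p ∈ Q.parts | boundaryEdges G p = k} := by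
  rw [card_filter, sum_crossingDarts G Q (fun p => if boundaryEdges G p = k then 1 else 0)]
  simp only [mul_ite, mul_one, mul_zero]
  rw [← sum_filter, sum_congr rfl fun p hp => (mem_filter.1 hp).2, sum_const, smul_eq_mul,
    mul_comm]

theorem card_crossingDarts_add_two (hG : G.IsTree)
    (hQ : ∀ p ∈ Q.parts, (G.induce (p : Set V)).Connected) :
    #(G.crossingDarts Q) + 2 = 2 * #Q.parts := by
  have hwithin : #{d : G.Dart | d.snd ∈ Q.part d.fst} + 2 * #Q.parts = 2 * Fintype.card V := by
    have h := sum_congr (s₁ := Q.parts) rfl fun p hp =>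
      card_darts_within_add_two hG.isAcyclic (hQ p hp)
    rw [sum_add_distrib, sum_const, smul_eq_mul, ← mul_sum, Q.sum_card_parts, card_univ] at h
    rw [card_eq_sum_ones, sum_darts_filter_part_fst G Q (fun p v => v ∈ p)]
    simp only [← card_eq_sum_ones]
    omega
  have hsplit := card_filter_add_card_filter_not (s := (univ : Finset G.Dart))
    (fun d : G.Dart => d.snd ∉ Q.part d.fst)
  simp only [not_not, card_univ, dart_card_eq_twice_card_edges] at hsplit
  have hedges := hG.card_edgeFinset
  rw [crossingDarts]
  omega

theorem boundaryEdges_pos_of_one_lt_card_parts (hG : G.Connected) (hQ : 1 < #Q.parts)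
    {p : Finset V} (hp : p ∈ Q.parts) : 0 < boundaryEdges G p := by
  obtain ⟨q, hq, hqp⟩ := exists_mem_ne hQ p
  obtain ⟨v, hv⟩ := Q.nonempty_of_mem_parts hq
  exact boundaryEdges_pos hG (Q.nonempty_of_mem_parts hp)
    fun hvp => hqp (Q.eq_of_mem_parts hq hp hv hvp)

variable {z : ℕ}

theorem succ_mul_card_heavyDarts_le (hb : ∀ p ∈ Q.parts, boundaryEdges G p ≤ 3) :
    (z + 1) * #(G.heavyDarts Q z) ≤ 6 * Fintype.card V := by
  have hfst : ∑ d ∈ G.crossingDarts Q, #(Q.part d.fst) ≤ 3 * Fintype.card V := by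
    rw [sum_crossingDarts G Q card, ← card_univ, ← Q.sum_card_parts, mul_sum]
    exact sum_le_sum fun p hp => Nat.mul_le_mul_right _ (hb p hp)
  calc (z + 1) * #(G.heavyDarts Q z)
      ≤ ∑ d ∈ G.heavyDarts Q z, (#(Q.part d.fst) + #(Q.part d.snd)) := by
        rw [mul_comm, ← smul_eq_mul, ← sum_const]
        exact sum_le_sum fun d hd => (mem_filter.1 hd).2
    _ ≤ ∑ d ∈ G.crossingDarts Q, (#(Q.part d.fst) + #(Q.part d.snd)) :=
        sum_le_sum_of_subset (filter_subset _ _)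
    _ = 2 * ∑ d ∈ G.crossingDarts Q, #(Q.part d.fst) := by
        rw [sum_add_distrib, sum_crossingDarts_snd (fun v => #(Q.part v)), two_mul]
    _ ≤ 6 * Fintype.card V := by omega

theorem card_crossingDarts_le_seven_mul_card_heavyDarts (hG : G.Connected) (hQ : 1 < #Q.parts)
    (hcard : #(G.crossingDarts Q) + 2 = 2 * #Q.parts)
    (hb : ∀ p ∈ Q.parts, boundaryEdges G p ≤ 3)
    (hmerge : ∀ d ∈ G.crossingDarts Q,
      boundaryEdges G (Q.part d.fst) + boundaryEdges G (Q.part d.snd) ≤ 4 →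
        z < #(Q.part d.fst) + #(Q.part d.snd)) :
    #(G.crossingDarts Q) ≤ 7 * #(G.heavyDarts Q z) := by
  set A : ℕ → Finset G.Dart := fun k =>
    {d ∈ G.crossingDarts Q | boundaryEdges G (Q.part d.fst) = k}
  have hb' (v : V) : boundaryEdges G (Q.part v) ≤ 3 := hb _ (Q.part_mem.2 (mem_univ v))
  have hleaves : A 1 ⊆ G.heavyDarts Q z := fun d hd => by
    obtain ⟨hd, h1⟩ := mem_filter.1 hd
    exact mem_filter.2 ⟨hd, hmerge d hd (by have := hb' d.snd; omega)⟩
  have hcover : G.crossingDarts Q ⊆ G.heavyDarts Q z ∪ A 3 ∪ (A 3).image Dart.symm := by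
    intro d hd
    simp only [mem_union, mem_image]
    by_cases h₁ : boundaryEdges G (Q.part d.fst) = 3
    · exact Or.inl (Or.inr (mem_filter.2 ⟨hd, h₁⟩))
    by_cases h₂ : boundaryEdges G (Q.part d.snd) = 3
    · exact Or.inr ⟨d.symm, mem_filter.2 ⟨symm_mem_crossingDarts.2 hd, h₂⟩, d.symm_symm⟩
    have := hb' d.fst
    have := hb' d.snd
    exact Or.inl (Or.inl (mem_filter.2 ⟨hd, hmerge d hd (by omega)⟩))
  have hhandshake : #{p ∈ Q.parts | boundaryEdges G p = 3} + 2 =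
      #{p ∈ Q.parts | boundaryEdges G p = 1} := by
    refine card_filter_eq_three_add_two _ _
      (fun p hp => ⟨boundaryEdges_pos_of_one_lt_card_parts hG hQ hp, hb p hp⟩) ?_
    have hsum := sum_crossingDarts G Q (fun _ => 1)
    simp only [sum_const, smul_eq_mul, mul_one] at hsum
    omega
  have h₁ : #(A 1) = 1 * _ := card_crossingDarts_filter_boundaryEdges_eq 1
  have h₃ : #(A 3) = 3 * _ := card_crossingDarts_filter_boundaryEdges_eq 3
  have hcover_card := (card_le_card hcover).trans <| (card_union_le _ _).trans <|
    add_le_add (card_union_le _ _) card_image_le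
  have hleaves_card := card_le_card hleaves
  omega

theorem succ_mul_card_parts_sub_one_le (hG : G.IsTree)
    (hQ : ∀ p ∈ Q.parts, (G.induce (p : Set V)).Connected)
    (hb : ∀ p ∈ Q.parts, boundaryEdges G p ≤ 3)
    (hmerge : ∀ d ∈ G.crossingDarts Q,
      boundaryEdges G (Q.part d.fst) + boundaryEdges G (Q.part d.snd) ≤ 4 →
        z < #(Q.part d.fst) + #(Q.part d.snd)) :
    (z + 1) * (#Q.parts - 1) ≤ 21 * Fintype.card V := by
  rcases le_or_gt #Q.parts 1 with h | h
  · simp [Nat.sub_eq_zero_of_le h]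
  have hcard := card_crossingDarts_add_two hG hQ
  have hheavy := card_crossingDarts_le_seven_mul_card_heavyDarts hG.connected h hcard hb hmerge
  have hsize := succ_mul_card_heavyDarts_le (z := z) hb
  have : 2 * ((z + 1) * (#Q.parts - 1)) ≤ 7 * ((z + 1) * #(G.heavyDarts Q z)) := by
    rw [mul_left_comm, mul_left_comm 7, show 2 * (#Q.parts - 1) = #(G.crossingDarts Q) by omega]
    exact Nat.mul_le_mul_left _ hheavy
  omega

end Crossing

end SimpleGraph

namespace IsRestrictedPartition

open SimpleGraph

variable {V : Type} [Fintype V] {T : SimpleGraph V} {z : ℕ} {P : Finset (Finset V)}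

noncomputable def toFinpartition (hP : IsRestrictedPartition T z P) :
    Finpartition (univ : Finset V) :=
  Finpartition.ofExistsUnique P (fun _ _ => subset_univ _) (fun v _ => hP.1 v)
    (fun h => not_nonempty_empty (hP.2.1 _ h))

theorem boundaryEdges_le_three (hP : IsRestrictedPartition T z P)
    (hdeg : ∀ v, T.degree v ≤ 3) {p : Finset V} (hp : p ∈ P) : boundaryEdges T p ≤ 3 := by
  by_cases h : 2 < boundaryEdges T p
  · obtain ⟨v, rfl⟩ := card_eq_one.1 (hP.2.2.2.2.1 p hp h)
    exact (boundaryEdges_singleton T v).trans_le (hdeg v)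
  · omega

theorem lt_card_part_add_card_part (hP : IsRestrictedPartition T z P) {d : T.Dart}
    (hd : d ∈ T.crossingDarts hP.toFinpartition)
    (h4 : boundaryEdges T (hP.toFinpartition.part d.fst) +
      boundaryEdges T (hP.toFinpartition.part d.snd) ≤ 4) :
    z < #(hP.toFinpartition.part d.fst) + #(hP.toFinpartition.part d.snd) := by
  set Q := hP.toFinpartition
  have hp : Q.part d.fst ∈ P := Q.part_mem.2 (mem_univ _)
  have hq : Q.part d.snd ∈ P := Q.part_mem.2 (mem_univ _)
  have hu := Q.mem_part (mem_univ d.fst)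
  have hv := Q.mem_part (mem_univ d.snd)
  have hvu : d.snd ∉ Q.part d.fst := mem_crossingDarts.1 hd
  have huv : d.fst ∉ Q.part d.snd := mem_crossingDarts.1 (symm_mem_crossingDarts.2 hd)
  have hpq : Q.part d.fst ≠ Q.part d.snd := fun h => hvu (h ▸ hv)
  have hdisj : Disjoint (Q.part d.fst) (Q.part d.snd) := Q.disjoint hp hq hpq
  rw [← card_union_of_disjoint hdisj]
  by_contra hz
  refine hP.2.2.2.2.2 _ hp _ hq hpq ⟨d.fst, hu, d.snd, hv, d.adj⟩ ⟨not_lt.1 hz, ?_, ?_⟩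
  · have := boundaryEdges_union_add_two_le d.adj hu hv huv hvu
    omega
  · rw [coe_union]
    exact connected_induce_union (hP.2.2.1 _ hp).preconnected (hP.2.2.1 _ hq).preconnected
      hu hv d.adj

end IsRestrictedPartition

theorem stmt_13 :
    ∃ c : ℕ, ∀ (V : Type) (_ : Fintype V) (T : SimpleGraph V),
      T.Connected → T.IsAcyclic → (∀ v : V, T.degree v ≤ 3) →
      ∀ (z : ℕ), 1 ≤ z → ∀ P : Finset (Finset V),
        IsRestrictedPartition T z P →
        P.card ≤ c * (Fintype.card V / z + 1) := by
  refine ⟨21, fun V _ T hconn hacyc hdeg z hz P hP => ?_⟩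
  have hbound : (z + 1) * (#P - 1) ≤ 21 * Fintype.card V :=
    SimpleGraph.succ_mul_card_parts_sub_one_le (Q := hP.toFinpartition) ⟨hconn, hacyc⟩ hP.2.2.1
      (fun _ hp => hP.boundaryEdges_le_three hdeg hp)
      (fun _ hd h4 => hP.lt_card_part_add_card_part hd h4)
  exact Nat.le_mul_div_add_one_of_mul_sub_one_le hz (by norm_num)
    ((Nat.mul_le_mul_right _ z.le_succ).trans hbound)
end

section
/- In any tree with maximum degree 3, if every leaf vertex has weight such that the leaf together with its neighbor has total weight exceeding z, every adjacent pair of degree-2 vertices has total weight exceeding z, and the total weight of all vertices is n, then the tree has at most O(n/z) vertices. -/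
open scoped Classical

open Finset SimpleGraph

theorem stmt_14 :
    ∃ c : ℕ, ∀ (V : Type) (_ : Fintype V) (T : SimpleGraph V),
      T.Connected → T.IsAcyclic → (∀ v : V, T.degree v ≤ 3) →
      ∀ (wt : V → ℕ), (∀ v, 1 ≤ wt v) →
      ∀ (n z : ℕ), 1 ≤ z → (∑ v : V, wt v) = n →
      (∀ v u : V, T.degree v = 1 → T.Adj v u → z < wt v + wt u) →
      (∀ v u : V, T.degree v = 2 → T.degree u = 2 → T.Adj v u → z < wt v + wt u) →
      Fintype.card V ≤ c * (n / z + 1) := by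
  use 70
  intro V _ T hconn hacyc hdeg wt hwt n z hz hn hleaf hd2
  by_cases hsmall : Fintype.card V ≤ 1
  · have h0 : 1 ≤ 70 * (n / z + 1) :=
      le_trans (Nat.le_add_left 1 _) (Nat.le_mul_of_pos_left _ (by norm_num))
    omega
  push_neg at hsmall
  -- every vertex has positive degree
  have hdegpos : ∀ v : V, 0 < T.degree v := by
    intro v
    rw [T.degree_pos_iff_exists_adj]
    obtain ⟨u, hu⟩ := Fintype.exists_ne_of_one_lt_card hsmall v
    obtain ⟨p⟩ := hconn v u
    cases p with
    | nil => exact absurd rfl hu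
    | cons h _ => exact ⟨_, h⟩
  -- basic finsets
  set H : Finset V := univ.filter (fun v => z < 2 * wt v) with hHdef
  set D1 : Finset V := univ.filter (fun v => T.degree v = 1) with hD1def
  set D2 : Finset V := univ.filter (fun v => T.degree v = 2) with hD2def
  set D3 : Finset V := univ.filter (fun v => T.degree v = 3) with hD3def
  set L1 : Finset V := univ.filter (fun v => 2 * wt v ≤ z ∧ T.degree v = 1) with hL1def
  set L2 : Finset V := univ.filter (fun v => 2 * wt v ≤ z ∧ T.degree v = 2) with hL2def
  -- neighbor counting lemma
  have nbhd : ∀ s t : Finset V, (∀ v ∈ s, ∃ u ∈ t, T.Adj u v) → s.card ≤ 3 * t.card := by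
    intro s t hst
    have hsub : s ⊆ t.biUnion (fun u => T.neighborFinset u) := by
      intro v hv
      obtain ⟨u, hu, hadj⟩ := hst v hv
      exact Finset.mem_biUnion.2 ⟨u, hu, (T.mem_neighborFinset u v).2 hadj⟩
    calc s.card ≤ (t.biUnion (fun u => T.neighborFinset u)).card := Finset.card_le_card hsub
      _ ≤ ∑ u ∈ t, (T.neighborFinset u).card := Finset.card_biUnion_le
      _ ≤ ∑ _u ∈ t, 3 := Finset.sum_le_sum (fun u _ => by
            simpa [SimpleGraph.card_neighborFinset_eq_degree] using hdeg u)
      _ = 3 * t.card := by rw [Finset.sum_const, smul_eq_mul, mul_comm]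
  -- heavy vertices bound
  have hHn : H.card * z ≤ 2 * n := by
    have h1 : H.card • z ≤ ∑ v ∈ H, 2 * wt v :=
      Finset.card_nsmul_le_sum H _ z (fun v hv => by
        simp only [hHdef, Finset.mem_filter] at hv; omega)
    have h2 : ∑ v ∈ H, 2 * wt v ≤ ∑ v ∈ univ, 2 * wt v :=
      Finset.sum_le_sum_of_subset (Finset.subset_univ H)
    have h3 : ∑ v ∈ univ, 2 * wt v = 2 * n := by rw [← Finset.mul_sum, hn]
    simpa [smul_eq_mul] using le_trans (le_trans h1 h2) (le_of_eq h3)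
  -- handshake
  have htree : T.IsTree := ⟨hconn, hacyc⟩
  have hedge := htree.card_edgeFinset
  have hsum : ∑ v : V, T.degree v = 2 * (Fintype.card V - 1) := by
    rw [T.sum_degrees_eq_twice_card_edges]; omega
  have hmem : ∀ v : V, T.degree v ∈ ({1, 2, 3} : Finset ℕ) := by
    intro v; have := hdeg v; have := hdegpos v
    simp only [Finset.mem_insert, Finset.mem_singleton]; omega
  have hcardpart : Fintype.card V = D1.card + D2.card + D3.card := by
    rw [← Finset.card_univ, Finset.card_eq_sum_card_fiberwise (fun v _ => hmem v)]
    rw [show ({1, 2, 3} : Finset ℕ) = insert 1 (insert 2 {3}) from rfl]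
    rw [Finset.sum_insert (by norm_num), Finset.sum_insert (by norm_num), Finset.sum_singleton,
      ← hD1def, ← hD2def, ← hD3def]
    ring
  have hdegsum : ∑ v : V, T.degree v = D1.card + 2 * D2.card + 3 * D3.card := by
    rw [← Finset.sum_fiberwise_of_maps_to (fun v (_ : v ∈ univ) => hmem v) (fun v => T.degree v)]
    rw [show ({1, 2, 3} : Finset ℕ) = insert 1 (insert 2 {3}) from rfl]
    rw [Finset.sum_insert (by norm_num), Finset.sum_insert (by norm_num), Finset.sum_singleton]
    have e1 : ∑ v ∈ univ.filter (fun v => T.degree v = 1), T.degree v = D1.card := by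
      rw [Finset.sum_congr rfl (fun v hv => (Finset.mem_filter.1 hv).2), Finset.sum_const,
        smul_eq_mul, mul_one, hD1def]
    have e2 : ∑ v ∈ univ.filter (fun v => T.degree v = 2), T.degree v = 2 * D2.card := by
      rw [Finset.sum_congr rfl (fun v hv => (Finset.mem_filter.1 hv).2), Finset.sum_const,
        smul_eq_mul, hD2def, mul_comm]
    have e3 : ∑ v ∈ univ.filter (fun v => T.degree v = 3), T.degree v = 3 * D3.card := by
      rw [Finset.sum_congr rfl (fun v hv => (Finset.mem_filter.1 hv).2), Finset.sum_const,
        smul_eq_mul, hD3def, mul_comm]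
    rw [e1, e2, e3]; ring
  have hD3D1 : D3.card + 2 ≤ D1.card := by omega
  -- light leaves have a heavy neighbor
  have hL1H : L1.card ≤ 3 * H.card := by
    apply nbhd
    intro v hv
    simp only [hL1def, Finset.mem_filter, Finset.mem_univ, true_and] at hv
    obtain ⟨u, hadj⟩ := (T.degree_pos_iff_exists_adj v).1 (hdegpos v)
    refine ⟨u, ?_, hadj.symm⟩
    have := hleaf v u hv.2 hadj
    simp only [hHdef, Finset.mem_filter, Finset.mem_univ, true_and]
    omega
  -- D1 ≤ L1 + H
  have hD1b : D1.card ≤ L1.card + H.card := by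
    have hsub : D1 ⊆ L1 ∪ H := by
      intro v hv
      simp only [hD1def, Finset.mem_filter, Finset.mem_univ, true_and] at hv
      simp only [Finset.mem_union, hL1def, hHdef, Finset.mem_filter, Finset.mem_univ, true_and]
      omega
    exact le_trans (Finset.card_le_card hsub) (Finset.card_union_le _ _)
  have hD3b : D3.card ≤ 4 * H.card := by omega
  -- light degree-2 vertices
  have hL2b : L2.card ≤ 3 * (H ∪ D1 ∪ D3).card := by
    apply nbhd
    intro v hv
    simp only [hL2def, Finset.mem_filter, Finset.mem_univ, true_and] at hv
    obtain ⟨u, hadj⟩ := (T.degree_pos_iff_exists_adj v).1 (hdegpos v)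
    refine ⟨u, ?_, hadj.symm⟩
    simp only [Finset.mem_union, hHdef, hD1def, hD3def, Finset.mem_filter, Finset.mem_univ,
      true_and]
    have hdu := hdeg u
    have hdu' := hdegpos u
    by_cases h2 : T.degree u = 2
    · have := hd2 v u hv.2 h2 hadj
      omega
    · omega
  have hL2H : L2.card ≤ 27 * H.card := by
    have : (H ∪ D1 ∪ D3).card ≤ H.card + D1.card + D3.card :=
      le_trans (Finset.card_union_le _ _) (by
        have := Finset.card_union_le H D1; omega)
    omega
  -- cover
  have hcover : (univ : Finset V) ⊆ H ∪ L1 ∪ L2 ∪ D3 := by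
    intro v _
    simp only [Finset.mem_union, hHdef, hL1def, hL2def, hD3def, Finset.mem_filter,
      Finset.mem_univ, true_and]
    have := hdeg v
    have := hdegpos v
    omega
  have hcard35 : Fintype.card V ≤ 35 * H.card := by
    have h1 : Fintype.card V ≤ (H ∪ L1 ∪ L2 ∪ D3).card := by
      rw [← Finset.card_univ]; exact Finset.card_le_card hcover
    have h2 : (H ∪ L1 ∪ L2 ∪ D3).card ≤ H.card + L1.card + L2.card + D3.card := by
      have a := Finset.card_union_le (H ∪ L1 ∪ L2) D3
      have b := Finset.card_union_le (H ∪ L1) L2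
      have c := Finset.card_union_le H L1
      omega
    omega
  -- final arithmetic
  have hq : H.card ≤ 2 * (n / z) + 1 := by
    by_contra h
    push_neg at h
    have h1 : (2 * (n / z) + 2) * z ≤ H.card * z := Nat.mul_le_mul_right z h
    have h2 : 2 * n < (2 * (n / z) + 2) * z := by
      have ha := Nat.div_add_mod n z
      have hb := Nat.mod_lt n (by omega : 0 < z)
      nlinarith
    omega
  omega
end

section
/- Let σ be a cyclic ordering of the vertices of a graph G drawn in convex position with straight-line edges, and suppose the linear arrangement obtained by cutting the circle has edge separation number at most w. Then every edge of G is crossed by at most 2w - 2 other edges in this convex drawing. -/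
open scoped Classical

/-- Two chords of a convex polygon, recorded as unordered pairs of positions
on the circle, cross when their endpoints interleave: `a < c < b < d`. -/
def ChordsCross {n : ℕ} (e f : Sym2 (Fin n)) : Prop :=
  ∃ a b c d : Fin n, e = s(a, b) ∧ f = s(c, d) ∧ a < c ∧ c < b ∧ b < d

/-- Number of edges crossing the prefix–suffix cut at position `k`. -/
noncomputable def cutEdges {n : ℕ} (G : SimpleGraph (Fin n)) (k : ℕ) : ℕ :=
  (G.edgeFinset.filter fun e =>
    ∃ u : Fin n, u ∈ e ∧ ∃ v : Fin n, v ∈ e ∧ (u : ℕ) < k ∧ k ≤ (v : ℕ)).card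

lemma sym2_eq_of_lt {n : ℕ} {a b c d : Fin n} (hab : a < b) (hcd : c < d)
    (h : s(a,b) = s(c,d)) : a = c ∧ b = d := by
  rw [Sym2.eq_iff] at h
  rcases h with ⟨rfl, rfl⟩ | ⟨rfl, rfl⟩
  · exact ⟨rfl, rfl⟩
  · exact absurd hcd (not_lt.2 hab.le)

lemma key {n w : ℕ} {G : SimpleGraph (Fin n)}
    (hw : ∀ k : ℕ, k ≤ n → cutEdges G k ≤ w) (a b : Fin n) (hab : a < b)
    (he : s(a,b) ∈ G.edgeFinset) :
    (G.edgeFinset.filter fun f => ChordsCross s(a,b) f ∨ ChordsCross f s(a,b)).card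
      ≤ 2 * w - 2 := by
  set C1 := G.edgeFinset.filter fun f =>
    ∃ u : Fin n, u ∈ f ∧ ∃ v : Fin n, v ∈ f ∧ (u : ℕ) < (b : ℕ) ∧ (b : ℕ) ≤ (v : ℕ) with hC1
  set C2 := G.edgeFinset.filter fun f =>
    ∃ u : Fin n, u ∈ f ∧ ∃ v : Fin n, v ∈ f ∧ (u : ℕ) < (a : ℕ) + 1 ∧ (a : ℕ) + 1 ≤ (v : ℕ) with hC2
  have heC1 : s(a,b) ∈ C1 := by
    rw [hC1, Finset.mem_filter]
    exact ⟨he, a, Sym2.mem_mk_left _ _, b, Sym2.mem_mk_right _ _, hab, le_rfl⟩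
  have heC2 : s(a,b) ∈ C2 := by
    rw [hC2, Finset.mem_filter]
    exact ⟨he, a, Sym2.mem_mk_left _ _, b, Sym2.mem_mk_right _ _, Nat.lt_succ_self _, hab⟩
  have hC1card : C1.card = cutEdges G (b : ℕ) := rfl
  have hC2card : C2.card = cutEdges G ((a : ℕ) + 1) := rfl
  have hw1 : C1.card ≤ w := hC1card ▸ hw _ (le_of_lt b.isLt)
  have hw2 : C2.card ≤ w := hC2card ▸ hw _ a.isLt
  have hwpos : 1 ≤ w := le_trans (Finset.card_pos.2 ⟨_, heC1⟩) hw1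
  have hsub1 : (G.edgeFinset.filter fun f => ChordsCross s(a,b) f) ⊆ C1.erase s(a,b) := by
    intro f hf
    rw [Finset.mem_filter] at hf
    obtain ⟨hfG, hcc⟩ := hf
    obtain ⟨a', b', c, d, heq, hfeq, h1, h2, h3⟩ := hcc
    obtain ⟨rfl, rfl⟩ := sym2_eq_of_lt hab (h1.trans h2) heq
    subst hfeq
    refine Finset.mem_erase.2 ⟨?_, ?_⟩
    · intro hfe
      obtain ⟨hca, _⟩ := sym2_eq_of_lt (h2.trans h3) hab hfe
      exact absurd (hca ▸ h1) (lt_irrefl _)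
    · rw [hC1, Finset.mem_filter]
      exact ⟨hfG, c, Sym2.mem_mk_left _ _, d, Sym2.mem_mk_right _ _, h2, h3.le⟩
  have hsub2 : (G.edgeFinset.filter fun f => ChordsCross f s(a,b)) ⊆ C2.erase s(a,b) := by
    intro f hf
    rw [Finset.mem_filter] at hf
    obtain ⟨hfG, hcc⟩ := hf
    obtain ⟨p, q, c, d, hfeq, heq, h1, h2, h3⟩ := hcc
    obtain ⟨rfl, rfl⟩ := sym2_eq_of_lt hab (h2.trans h3) heq
    subst hfeq
    refine Finset.mem_erase.2 ⟨?_, ?_⟩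
    · intro hfe
      obtain ⟨hpa, _⟩ := sym2_eq_of_lt (h1.trans h2) hab hfe
      exact absurd (hpa ▸ h1) (lt_irrefl _)
    · rw [hC2, Finset.mem_filter]
      exact ⟨hfG, p, Sym2.mem_mk_left _ _, q, Sym2.mem_mk_right _ _, Nat.lt_succ_of_lt h1, h2⟩
  have h1 : (G.edgeFinset.filter fun f => ChordsCross s(a,b) f).card ≤ w - 1 := by
    calc _ ≤ (C1.erase s(a,b)).card := Finset.card_le_card hsub1
    _ = C1.card - 1 := Finset.card_erase_of_mem heC1
    _ ≤ w - 1 := Nat.sub_le_sub_right hw1 1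
  have h2 : (G.edgeFinset.filter fun f => ChordsCross f s(a,b)).card ≤ w - 1 := by
    calc _ ≤ (C2.erase s(a,b)).card := Finset.card_le_card hsub2
    _ = C2.card - 1 := Finset.card_erase_of_mem heC2
    _ ≤ w - 1 := Nat.sub_le_sub_right hw2 1
  calc (G.edgeFinset.filter fun f => ChordsCross s(a,b) f ∨ ChordsCross f s(a,b)).card
      ≤ ((G.edgeFinset.filter fun f => ChordsCross s(a,b) f) ∪
         (G.edgeFinset.filter fun f => ChordsCross f s(a,b))).card := by
        rw [← Finset.filter_or]
    _ ≤ _ + _ := Finset.card_union_le _ _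
    _ ≤ (w - 1) + (w - 1) := Nat.add_le_add h1 h2
    _ ≤ 2 * w - 2 := by omega

/-- If the linear arrangement (cutting the circle) has edge separation number
at most `w`, then in the convex drawing every edge is crossed by at most
`2w - 2` other edges. -/
theorem stmt_17 (n w : ℕ) (G : SimpleGraph (Fin n))
    (hw : ∀ k : ℕ, k ≤ n → cutEdges G k ≤ w) :
    ∀ e ∈ G.edgeFinset,
      (G.edgeFinset.filter fun f => ChordsCross e f ∨ ChordsCross f e).card
        ≤ 2 * w - 2 := by
  intro e he
  induction e using Sym2.ind with
  | _ u v =>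
    have hne : u ≠ v := (SimpleGraph.mem_edgeFinset.1 he).ne
    rcases lt_or_gt_of_ne hne with h | h
    · exact key hw u v h he
    · rw [Sym2.eq_swap] at he ⊢
      exact key hw v u h he
end

section
/- Let G be a graph with m edges admitting a linear arrangement with edge separation number at most w. Then placing the vertices in convex position according to the arrangement and drawing edges as straight chords yields a drawing with at most 2wm crossings; hence G has a planarization with at most |V(G)| + 2wm vertices. -/
open scoped Classical

/-!
Charge each crossing pair `(e, f)`, with `e = s(a, b)`, `f = s(c, d)` and `a < c < b < d`, to `e`.
Then `f` crosses the cut at the right endpoint `b` of `e`, so at most `w` crossing pairs are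
charged to any one edge, which gives `wm ≤ 2wm` crossings.
-/

open Finset

theorem Finset.card_filter_product_eq_sum {α β : Type*} (s : Finset α) (t : Finset β)
    (r : α → β → Prop) [DecidablePred fun q : α × β => r q.1 q.2] [∀ a, DecidablePred (r a)] :
    #{q ∈ s ×ˢ t | r q.1 q.2} = ∑ a ∈ s, #{b ∈ t | r a b} := by
  simp only [card_eq_sum_ones, sum_filter, sum_product]

theorem ChordsCross.crosses_cut_sup {n : ℕ} {e f : Sym2 (Fin n)} (h : ChordsCross e f) :
    ∃ u ∈ f, ∃ v ∈ f, (u : ℕ) < (e.sup : ℕ) ∧ (e.sup : ℕ) ≤ v := by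
  obtain ⟨a, b, c, d, rfl, rfl, hac, hcb, hbd⟩ := h
  have hsup : s(a, b).sup = b := by simp [(hac.trans hcb).le]
  rw [hsup]
  exact ⟨c, Sym2.mem_mk_left c d, d, Sym2.mem_mk_right c d, hcb, hbd.le⟩

theorem card_chordsCross_le_cutEdges {n : ℕ} (G : SimpleGraph (Fin n)) (e : Sym2 (Fin n)) :
    #{f ∈ G.edgeFinset | ChordsCross e f} ≤ cutEdges G (e.sup : ℕ) :=
  card_le_card fun f hf => by
    rw [mem_filter] at hf ⊢
    exact ⟨hf.1, hf.2.crosses_cut_sup⟩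

theorem card_crossings_le_mul {n w : ℕ} (G : SimpleGraph (Fin n))
    (hw : ∀ k : ℕ, k ≤ n → cutEdges G k ≤ w) :
    #{q ∈ G.edgeFinset ×ˢ G.edgeFinset | ChordsCross q.1 q.2} ≤ w * #G.edgeFinset := by
  rw [card_filter_product_eq_sum _ _ ChordsCross, mul_comm, ← smul_eq_mul]
  exact sum_le_card_nsmul _ _ _ fun e _ =>
    (card_chordsCross_le_cutEdges G e).trans (hw _ Fin.is_le')

/-- A graph with a linear arrangement of edge separation number at most `w`,
drawn in convex position, has at most `2wm` crossings; hence a planarization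
with at most `n + 2wm` vertices. -/
theorem stmt_18 (n w : ℕ) (G : SimpleGraph (Fin n))
    (hw : ∀ k : ℕ, k ≤ n → cutEdges G k ≤ w) :
    ((G.edgeFinset ×ˢ G.edgeFinset).filter fun q => ChordsCross q.1 q.2).card
        ≤ 2 * w * G.edgeFinset.card ∧
      n + ((G.edgeFinset ×ˢ G.edgeFinset).filter fun q => ChordsCross q.1 q.2).card
        ≤ n + 2 * w * G.edgeFinset.card := by
  have hcross := card_crossings_le_mul G hw
  have hle : w * #G.edgeFinset ≤ 2 * w * #G.edgeFinset := by gcongr; omega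
  exact ⟨hcross.trans hle, by omega⟩
end
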